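/- The function κ ↦ −(1/(3(1+κ²))) · [ (2+κ²)/(1+κ²) − 2 E(κ)/K(κ) ] is strictly decreasing on the interval (0,1). -/

import Mathlib

/-!
Write `Δ(κ, t) = √(1 - κ² sin² t)`. Differentiating under the integral sign, and using
`κ² sin² t = 1 - Δ²` together with the integration by parts identity `(1 - κ²) ∫ Δ⁻³ = E`
(from `d/dt (κ² sin t cos t / Δ) = Δ - (1 - κ²) / Δ³`), gives Legendre's formulas
`K' = (E / (1 - κ²) - K) / κ` and `E' = (E - K) / κ`. The derivative of the function is then
`-2 ((1 - κ²) K - (1 + κ²) E)² / (3 κ (1 - κ²) K² (1 + κ²)³)`, which is negative on `(0, 1)`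
because `(1 + κ²) E > E ≥ (1 - κ²) K`, the last inequality holding pointwise: `Δ ≥ (1 - κ²) / Δ`.
-/

/-- Complete elliptic integral of the first kind,
`K(κ) = ∫₀^{π/2} (1 − κ² sin²t)^{−1/2} dt`. -/
noncomputable def ellK (κ : ℝ) : ℝ :=
  ∫ t in (0:ℝ)..(Real.pi/2), 1 / Real.sqrt (1 - κ^2 * Real.sin t ^ 2)

/-- Complete elliptic integral of the second kind,
`E(κ) = ∫₀^{π/2} (1 − κ² sin²t)^{1/2} dt`. -/
noncomputable def ellE (κ : ℝ) : ℝ :=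
  ∫ t in (0:ℝ)..(Real.pi/2), Real.sqrt (1 - κ^2 * Real.sin t ^ 2)

open Real Set Metric Filter Topology Function MeasureTheory intervalIntegral
open scoped Interval

theorem hasDerivAt_intervalIntegral_of_continuousOn_uncurry
    {𝕜 E : Type*} [RCLike 𝕜] [NormedAddCommGroup E] [NormedSpace ℝ E] [NormedSpace 𝕜 E]
    {F F' : 𝕜 → ℝ → E} {x₀ : 𝕜} {s : Set 𝕜} {a b : ℝ} (hs : s ∈ 𝓝 x₀)
    (hF : ∀ x ∈ s, ContinuousOn (F x) [[a, b]])
    (hF' : ContinuousOn (uncurry F') (s ×ˢ [[a, b]]))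
    (hderiv : ∀ t ∈ [[a, b]], ∀ x ∈ s, HasDerivAt (F · t) (F' x t) x) :
    HasDerivAt (fun x => ∫ t in a..b, F x t) (∫ t in a..b, F' x₀ t) x₀ := by
  obtain ⟨ε, hε, hεs⟩ := nhds_basis_closedBall.mem_iff.1 hs
  obtain ⟨C, hC⟩ := ((isCompact_closedBall x₀ ε).prod isCompact_uIcc).exists_bound_of_continuousOn
    (hF'.mono (prod_mono hεs le_rfl))
  have hx₀ : x₀ ∈ s := mem_of_mem_nhds hs
  refine (hasDerivAt_integral_of_dominated_loc_of_deriv_le (bound := fun _ => C)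
    (closedBall_mem_nhds x₀ hε)
    (eventually_of_mem hs fun x hx => ((hF x hx).mono uIoc_subset_uIcc).aestronglyMeasurable
      measurableSet_uIoc)
    (hF x₀ hx₀).intervalIntegrable
    (((hF'.uncurry_left x₀ hx₀).mono uIoc_subset_uIcc).aestronglyMeasurable measurableSet_uIoc)
    (ae_of_all _ fun t ht x hx => hC (x, t) ⟨hx, uIoc_subset_uIcc ht⟩)
    intervalIntegrable_const
    (ae_of_all _ fun t ht x hx => hderiv t (uIoc_subset_uIcc ht) x (hεs hx))).2

noncomputable def ellDelta (κ t : ℝ) : ℝ := √(1 - κ ^ 2 * sin t ^ 2)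

section ellDelta

variable {κ : ℝ}

lemma one_sub_sq_mul_sin_sq_pos (hκ : κ ^ 2 < 1) (t : ℝ) : 0 < 1 - κ ^ 2 * sin t ^ 2 := by
  nlinarith [sin_sq_le_one t, sq_nonneg κ]

lemma ellDelta_pos (hκ : κ ^ 2 < 1) (t : ℝ) : 0 < ellDelta κ t :=
  sqrt_pos.2 (one_sub_sq_mul_sin_sq_pos hκ t)

lemma ellDelta_sq (hκ : κ ^ 2 < 1) (t : ℝ) : ellDelta κ t ^ 2 = 1 - κ ^ 2 * sin t ^ 2 :=
  sq_sqrt (one_sub_sq_mul_sin_sq_pos hκ t).le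

lemma continuous_ellDelta : Continuous (uncurry ellDelta) := by
  unfold ellDelta; fun_prop

lemma hasDerivAt_ellDelta_modulus (hκ : κ ^ 2 < 1) (t : ℝ) :
    HasDerivAt (ellDelta · t) (-(κ * sin t ^ 2) / ellDelta κ t) κ := by
  refine ((((hasDerivAt_pow 2 κ).mul_const (sin t ^ 2)).const_sub 1).sqrt
    (one_sub_sq_mul_sin_sq_pos hκ t).ne').congr_deriv ?_
  unfold ellDelta
  field_simp
  ring

lemma hasDerivAt_one_div_ellDelta_modulus (hκ : κ ^ 2 < 1) (t : ℝ) :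
    HasDerivAt (fun x => 1 / ellDelta x t) (κ * sin t ^ 2 / ellDelta κ t ^ 3) κ := by
  refine ((hasDerivAt_const κ (1 : ℝ)).div (hasDerivAt_ellDelta_modulus hκ t)
    (ellDelta_pos hκ t).ne').congr_deriv ?_
  field_simp
  ring

lemma hasDerivAt_ellDelta_angle (hκ : κ ^ 2 < 1) (t : ℝ) :
    HasDerivAt (ellDelta κ) (-(κ ^ 2 * (sin t * cos t)) / ellDelta κ t) t := by
  refine ((((hasDerivAt_sin t).fun_pow 2).const_mul (κ ^ 2)).const_sub 1).sqrt
    (one_sub_sq_mul_sin_sq_pos hκ t).ne' |>.congr_deriv ?_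
  unfold ellDelta
  field_simp
  ring

lemma hasDerivAt_sin_mul_cos_div_ellDelta (hκ : κ ^ 2 < 1) (t : ℝ) :
    HasDerivAt (fun t => κ ^ 2 * (sin t * cos t) / ellDelta κ t)
      (ellDelta κ t - (1 - κ ^ 2) / ellDelta κ t ^ 3) t := by
  refine ((((hasDerivAt_sin t).fun_mul (hasDerivAt_cos t)).const_mul (κ ^ 2)).fun_div
    (hasDerivAt_ellDelta_angle hκ t) (ellDelta_pos hκ t).ne').congr_deriv ?_
  have hΔ := ellDelta_sq hκ t
  have hpy := sin_sq_add_cos_sq t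
  field_simp
  rw [div_left_inj' (pow_ne_zero 3 (ellDelta_pos hκ t).ne')]
  linear_combination (κ ^ 2 * (cos t ^ 2 - sin t ^ 2) - ellDelta κ t ^ 2 - (1 - κ ^ 2 * sin t ^ 2)) * hΔ
    + κ ^ 2 * hpy

end ellDelta

section ellipticIntegrals

variable {κ : ℝ}

lemma ellK_eq_integral (κ : ℝ) : ellK κ = ∫ t in (0 : ℝ)..π / 2, 1 / ellDelta κ t := rfl

lemma ellE_eq_integral (κ : ℝ) : ellE κ = ∫ t in (0 : ℝ)..π / 2, ellDelta κ t := rfl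

lemma continuous_one_div_ellDelta_pow (hκ : κ ^ 2 < 1) (n : ℕ) :
    Continuous fun t => 1 / ellDelta κ t ^ n :=
  continuous_const.div ((continuous_ellDelta.uncurry_left κ).pow n)
    fun t => pow_ne_zero n (ellDelta_pos hκ t).ne'

lemma continuous_one_div_ellDelta (hκ : κ ^ 2 < 1) : Continuous fun t => 1 / ellDelta κ t := by
  simpa using continuous_one_div_ellDelta_pow hκ 1

lemma integral_one_div_ellDelta_pow_three (hκ : κ ^ 2 < 1) :
    ∫ t in (0 : ℝ)..π / 2, 1 / ellDelta κ t ^ 3 = ellE κ / (1 - κ ^ 2) := by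
  have hΔ := (continuous_ellDelta.uncurry_left κ).intervalIntegrable (μ := volume) 0 (π / 2)
  have hΔ3 := ((continuous_one_div_ellDelta_pow hκ 3).intervalIntegrable (μ := volume) 0
    (π / 2)).const_mul (1 - κ ^ 2)
  simp only [mul_one_div] at hΔ3
  have hftc := integral_eq_sub_of_hasDerivAt (fun t _ => hasDerivAt_sin_mul_cos_div_ellDelta hκ t)
    (hΔ.sub hΔ3)
  have hconst : ∫ t in (0 : ℝ)..π / 2, (1 - κ ^ 2) / ellDelta κ t ^ 3
      = (1 - κ ^ 2) * ∫ t in (0 : ℝ)..π / 2, 1 / ellDelta κ t ^ 3 := by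
    simp_rw [← intervalIntegral.integral_const_mul, mul_one_div]
  rw [integral_sub hΔ hΔ3, hconst, ← ellE_eq_integral] at hftc
  simp only [sin_pi_div_two, cos_pi_div_two, sin_zero, mul_zero, zero_mul, zero_div,
    sub_zero] at hftc
  rw [eq_div_iff (by linarith)]
  linarith

lemma sq_lt_one_mem_nhds (hκ : κ ^ 2 < 1) : {x : ℝ | x ^ 2 < 1} ∈ 𝓝 κ :=
  (isOpen_lt (by fun_prop) continuous_const).mem_nhds hκ

lemma hasDerivAt_ellK (hκ : κ ^ 2 < 1) (h0 : κ ≠ 0) :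
    HasDerivAt ellK ((ellE κ / (1 - κ ^ 2) - ellK κ) / κ) κ := by
  refine (hasDerivAt_intervalIntegral_of_continuousOn_uncurry (sq_lt_one_mem_nhds hκ)
    (F := fun x t => 1 / ellDelta x t) (F' := fun x t => x * sin t ^ 2 / ellDelta x t ^ 3)
    (fun x hx => (continuous_one_div_ellDelta hx).continuousOn)
    (ContinuousOn.div (by fun_prop) (continuous_ellDelta.pow 3).continuousOn
      fun p hp => pow_ne_zero 3 (ellDelta_pos hp.1 p.2).ne')
    (fun t _ x hx => hasDerivAt_one_div_ellDelta_modulus hx t)).congr_deriv ?_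
  have hK := (continuous_one_div_ellDelta hκ).intervalIntegrable (μ := volume) 0 (π / 2)
  have hK3 := (continuous_one_div_ellDelta_pow hκ 3).intervalIntegrable (μ := volume) 0 (π / 2)
  rw [← integral_one_div_ellDelta_pow_three hκ, ellK_eq_integral, ← integral_sub hK3 hK,
    ← intervalIntegral.integral_div]
  refine integral_congr fun t _ => ?_
  have hΔ := ellDelta_sq hκ t
  have hΔ0 := (ellDelta_pos hκ t).ne'
  field_simp
  linear_combination hΔ

lemma hasDerivAt_ellE (hκ : κ ^ 2 < 1) (h0 : κ ≠ 0) :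
    HasDerivAt ellE ((ellE κ - ellK κ) / κ) κ := by
  refine (hasDerivAt_intervalIntegral_of_continuousOn_uncurry (sq_lt_one_mem_nhds hκ)
    (F := ellDelta) (F' := fun x t => -(x * sin t ^ 2) / ellDelta x t)
    (fun x _ => (continuous_ellDelta.uncurry_left x).continuousOn)
    (ContinuousOn.div (by fun_prop) continuous_ellDelta.continuousOn
      fun p hp => (ellDelta_pos hp.1 p.2).ne')
    (fun t _ x hx => hasDerivAt_ellDelta_modulus hx t)).congr_deriv ?_
  have hE := (continuous_ellDelta.uncurry_left κ).intervalIntegrable (μ := volume) 0 (π / 2)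
  have hK := (continuous_one_div_ellDelta hκ).intervalIntegrable (μ := volume) 0 (π / 2)
  rw [ellE_eq_integral, ellK_eq_integral, ← integral_sub hE hK, ← intervalIntegral.integral_div]
  refine integral_congr fun t _ => ?_
  have hΔ := ellDelta_sq hκ t
  have hΔ0 := (ellDelta_pos hκ t).ne'
  field_simp
  linear_combination -hΔ

lemma ellK_pos (hκ : κ ^ 2 < 1) : 0 < ellK κ := by
  refine intervalIntegral_pos_of_pos_on
    ((continuous_one_div_ellDelta hκ).intervalIntegrable 0 (π / 2)) (fun t _ => ?_)
    (by positivity)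
  have := ellDelta_pos hκ t
  positivity

lemma ellE_pos (hκ : κ ^ 2 < 1) : 0 < ellE κ :=
  intervalIntegral_pos_of_pos_on ((continuous_ellDelta.uncurry_left κ).intervalIntegrable 0 _)
    (fun t _ => ellDelta_pos hκ t) (by positivity)

lemma one_sub_sq_mul_ellK_le_ellE (hκ : κ ^ 2 < 1) : (1 - κ ^ 2) * ellK κ ≤ ellE κ := by
  rw [ellK_eq_integral, ellE_eq_integral, ← intervalIntegral.integral_const_mul]
  refine integral_mono_on (by positivity)
    (((continuous_one_div_ellDelta hκ).intervalIntegrable 0 _).const_mul _)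
    ((continuous_ellDelta.uncurry_left κ).intervalIntegrable 0 _) fun t _ => ?_
  have hΔ := ellDelta_sq hκ t
  have hΔ0 := ellDelta_pos hκ t
  rw [mul_one_div, div_le_iff₀ hΔ0]
  nlinarith [sin_sq_le_one t, sq_nonneg κ]

lemma one_sub_sq_mul_ellK_lt_one_add_sq_mul_ellE (hκ : κ ^ 2 < 1) (h0 : κ ≠ 0) :
    (1 - κ ^ 2) * ellK κ < (1 + κ ^ 2) * ellE κ := by
  have hκ0 : 0 < κ ^ 2 := by positivity
  nlinarith [one_sub_sq_mul_ellK_le_ellE hκ, mul_pos hκ0 (ellE_pos hκ)]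

end ellipticIntegrals

lemma hasDerivAt_ellE_div_ellK_combination {κ : ℝ} (hκ : κ ^ 2 < 1) (h0 : κ ≠ 0) :
    HasDerivAt
      (fun κ : ℝ => -(1 / (3 * (1 + κ^2))) * ((2 + κ^2) / (1 + κ^2) - 2 * ellE κ / ellK κ))
      (-(2 * ((1 - κ ^ 2) * ellK κ - (1 + κ ^ 2) * ellE κ) ^ 2 /
        (3 * κ * (1 - κ ^ 2) * ellK κ ^ 2 * (1 + κ ^ 2) ^ 3))) κ := by
  have hK0 := (ellK_pos hκ).ne'
  have hm : 1 - κ ^ 2 ≠ 0 := by linarith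
  have hp : HasDerivAt (fun x : ℝ => 1 + x ^ 2) (2 * κ) κ := by
    simpa using (hasDerivAt_pow 2 κ).const_add 1
  have hp' : HasDerivAt (fun x : ℝ => 2 + x ^ 2) (2 * κ) κ := by
    simpa using (hasDerivAt_pow 2 κ).const_add 2
  have hq := ((hasDerivAt_ellE hκ h0).const_mul 2).fun_div (hasDerivAt_ellK hκ h0) hK0
  refine (((hasDerivAt_const κ (1 : ℝ)).fun_div (hp.const_mul 3) (by positivity)).fun_neg.fun_mul
    ((hp'.fun_div hp (by positivity)).fun_sub hq)).congr_deriv ?_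
  field_simp
  ring

/-- the function
`κ ↦ −(1/(3(1+κ²)))·[(2+κ²)/(1+κ²) − 2E(κ)/K(κ)]` is strictly decreasing on `(0,1)`. -/
theorem statement14 :
    StrictAntiOn
      (fun κ : ℝ => -(1 / (3 * (1 + κ^2))) * ((2 + κ^2) / (1 + κ^2) - 2 * ellE κ / ellK κ))
      (Set.Ioo (0:ℝ) 1) := by
  have hsq : ∀ κ ∈ Ioo (0 : ℝ) 1, κ ^ 2 < 1 := fun κ hκ => pow_lt_one₀ hκ.1.le hκ.2 two_ne_zero
  have hderiv := fun κ (hκ : κ ∈ Ioo (0 : ℝ) 1) =>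
    hasDerivAt_ellE_div_ellK_combination (hsq κ hκ) hκ.1.ne'
  refine strictAntiOn_of_deriv_neg (convex_Ioo 0 1)
    (fun κ hκ => (hderiv κ hκ).continuousAt.continuousWithinAt) fun κ hκ => ?_
  rw [interior_Ioo] at hκ
  rw [(hderiv κ hκ).deriv, neg_lt_zero]
  have hK := ellK_pos (hsq κ hκ)
  have hgap := sub_ne_zero.2 (one_sub_sq_mul_ellK_lt_one_add_sq_mul_ellE (hsq κ hκ) hκ.1.ne').ne
  have hκ0 := hκ.1
  have hκ1 : 0 < 1 - κ ^ 2 := sub_pos.2 (hsq κ hκ)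
  positivity
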